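/- For every θ ∈ ℝ, Bob's expected local energy in the post-protocol state satisfies Tr[ρ_QET(θ)·(H₂ + V)] = (1/√(h²+k²))·[−h·k·sin 2θ + (h² + 2k²)·(1 − cos 2θ)]. -/

import Mathlib

open Matrix Kronecker
open scoped ComplexOrder

noncomputable section

abbrev M2 : Type := Matrix (Fin 2) (Fin 2) ℂ
abbrev M4 : Type := Matrix (Fin 2 × Fin 2) (Fin 2 × Fin 2) ℂ

/-- Pauli X matrix. -/
def σx : M2 := !![0, 1; 1, 0]
/-- Pauli Y matrix. -/
def σy : M2 := !![0, -Complex.I; Complex.I, 0]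
/-- Pauli Z matrix. -/
def σz : M2 := !![1, 0; 0, -1]

def X1 : M4 := σx ⊗ₖ (1 : M2)
def Z1 : M4 := σz ⊗ₖ (1 : M2)
def Z2 : M4 := (1 : M2) ⊗ₖ σz
def Y2 : M4 := (1 : M2) ⊗ₖ σy
def XX : M4 := σx ⊗ₖ σx

def H1m (k h : ℝ) : M4 := (h : ℂ) • Z1 + ((h ^ 2 / Real.sqrt (h ^ 2 + k ^ 2) : ℝ) : ℂ) • (1 : M4)
def H2m (k h : ℝ) : M4 := (h : ℂ) • Z2 + ((h ^ 2 / Real.sqrt (h ^ 2 + k ^ 2) : ℝ) : ℂ) • (1 : M4)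
def Vm (k h : ℝ) : M4 :=
  ((2 * k : ℝ) : ℂ) • XX + ((2 * k ^ 2 / Real.sqrt (h ^ 2 + k ^ 2) : ℝ) : ℂ) • (1 : M4)
def Hm (k h : ℝ) : M4 := H1m k h + H2m k h + Vm k h

def e00 : (Fin 2 × Fin 2) → ℂ := fun p => if p = (0, 0) then 1 else 0
def e11 : (Fin 2 × Fin 2) → ℂ := fun p => if p = (1, 1) then 1 else 0

/-- the ground state of the minimal QET Hamiltonian -/
def gs (k h : ℝ) : (Fin 2 × Fin 2) → ℂ := fun p =>
  ((1 / Real.sqrt 2 * Real.sqrt (1 - h / Real.sqrt (h ^ 2 + k ^ 2)) : ℝ) : ℂ) * e00 p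
  - ((1 / Real.sqrt 2 * Real.sqrt (1 + h / Real.sqrt (h ^ 2 + k ^ 2)) : ℝ) : ℂ) * e11 p

/-- the rank-one operator |g⟩⟨g| -/
def gProj (k h : ℝ) : M4 := Matrix.vecMulVec (gs k h) (star (gs k h))

/-- Alice's projective measurement operator -/
def PA (μ : ℝ) : M4 := (2 : ℂ)⁻¹ • ((1 : M4) + (μ : ℂ) • X1)

/-- Bob's conditional unitary -/
def UB (ν θ : ℝ) : M4 :=
  ((Real.cos θ : ℝ) : ℂ) • (1 : M4) - ((Complex.I * ν * Real.sin θ) : ℂ) • Y2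

/-- the post-protocol state -/
def ρQET (k h θ : ℝ) : M4 :=
  UB (-1) θ * PA (-1) * gProj k h * PA (-1) * (UB (-1) θ)ᴴ
  + UB 1 θ * PA 1 * gProj k h * PA 1 * (UB 1 θ)ᴴ

/-- the normalized post-measurement state with prover outcome μ and verifier operation UB ν θ -/
def ρMN (k h μ ν θ : ℝ) : M4 := (2 : ℂ) • (UB ν θ * PA μ * gProj k h * PA μ * (UB ν θ)ᴴ)

/-! Pass to the Heisenberg picture: `Tr[ρ_QET(θ) E] = ⟨g| Σ_μ P_A(μ) U_B(μ,θ)† E U_B(μ,θ) P_A(μ) |g⟩`.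
On Bob's qubit `U_B(μ,θ)` is a real rotation, and conjugating by it turns `Z₂` into
`cos 2θ Z₂ - μ sin 2θ X₂` and `X ⊗ X` into `cos 2θ X ⊗ X + μ sin 2θ X ⊗ Z`. Every term commutes
with `X₁`, so the sum over Alice's outcomes replaces `μ` by `X₁`, leaving an observable in the span
of `I`, `Z₂` and `X ⊗ X`. In the ground state these have expectations `1`, `-h/r` and `-k/r`. -/

def rot (c s : ℝ) : M2 := !![(c : ℂ), -s; s, c]

lemma σx_mul_σx : σx * σx = 1 := by
  simp [σx, Matrix.one_fin_two]

section Rotation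

variable (c s : ℝ)

lemma rot_conjTranspose_mul_self : (rot c s)ᴴ * rot c s = ((c ^ 2 + s ^ 2 : ℝ) : ℂ) • 1 := by
  ext i j
  fin_cases i <;> fin_cases j <;> simp [rot, mul_apply, Fin.sum_univ_two] <;> ring

lemma rot_conj_σz :
    (rot c s)ᴴ * σz * rot c s = ((c ^ 2 - s ^ 2 : ℝ) : ℂ) • σz - ((2 * c * s : ℝ) : ℂ) • σx := by
  ext i j
  fin_cases i <;> fin_cases j <;> simp [rot, σz, σx, mul_apply, Fin.sum_univ_two] <;> ring

lemma rot_conj_σx :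
    (rot c s)ᴴ * σx * rot c s = ((c ^ 2 - s ^ 2 : ℝ) : ℂ) • σx + ((2 * c * s : ℝ) : ℂ) • σz := by
  ext i j
  fin_cases i <;> fin_cases j <;> simp [rot, σz, σx, mul_apply, Fin.sum_univ_two] <;> ring

end Rotation

section Kronecker

variable {α l n : Type*} [CommRing α] [Fintype l] [Fintype n]

lemma conjTranspose_one_kronecker_mul_kronecker_mul [StarRing α] [DecidableEq l]
    (U B : Matrix n n α) (A : Matrix l l α) :
    ((1 : Matrix l l α) ⊗ₖ U)ᴴ * (A ⊗ₖ B) * ((1 : Matrix l l α) ⊗ₖ U) = A ⊗ₖ (Uᴴ * B * U) := by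
  rw [conjTranspose_kronecker, conjTranspose_one, ← mul_kronecker_mul, ← mul_kronecker_mul,
    one_mul, mul_one]

lemma Commute.kronecker_one_left [DecidableEq n] {A C : Matrix l l α} (hAC : Commute A C)
    (D : Matrix n n α) : Commute (A ⊗ₖ (1 : Matrix n n α)) (C ⊗ₖ D) := by
  rw [Commute, SemiconjBy, ← mul_kronecker_mul, ← mul_kronecker_mul, hAC.eq, one_mul, mul_one]

end Kronecker

theorem pinching_sum_eq {A : Type*} [Ring A] [Algebra ℂ A] {x a b : A} (hx : x * x = 1)
    (ha : Commute x a) (hb : Commute x b) :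
    ((2 : ℂ)⁻¹ • (1 - x)) * (a - b) * ((2 : ℂ)⁻¹ • (1 - x))
      + ((2 : ℂ)⁻¹ • (1 + x)) * (a + b) * ((2 : ℂ)⁻¹ • (1 + x)) = a + x * b := by
  set p : A := (2 : ℂ)⁻¹ • (1 + x)
  set q : A := (2 : ℂ)⁻¹ • (1 - x)
  have hpp : p * p = p := by
    simp only [p, smul_mul_smul, mul_add, add_mul, hx, mul_one, one_mul]; module
  have hqq : q * q = q := by
    simp only [q, smul_mul_smul, mul_sub, sub_mul, hx, mul_one, one_mul]; module
  have hp : ∀ y, Commute x y → p * y = y * p := fun y hy =>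
    (((Commute.one_left y).add_left hy).smul_left _).eq
  have hq : ∀ y, Commute x y → q * y = y * q := fun y hy =>
    (((Commute.one_left y).sub_left hy).smul_left _).eq
  calc q * (a - b) * q + p * (a + b) * p
      = (a - b) * (q * q) + (a + b) * (p * p) := by
        rw [hq _ (ha.sub_right hb), hp _ (ha.add_right hb), mul_assoc, mul_assoc]
    _ = a * (p + q) + b * (p - q) := by rw [hpp, hqq]; noncomm_ring
    _ = a + x * b := by
        rw [show p + q = 1 by simp only [p, q]; module, show p - q = x by simp only [p, q]; module,
          mul_one, hb.eq]

section Heisenberg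

def X2 : M4 := (1 : M2) ⊗ₖ σx

lemma UB_eq_one_kronecker_rot (ν θ : ℝ) :
    UB ν θ = (1 : M2) ⊗ₖ rot (Real.cos θ) (ν * Real.sin θ) := by
  ext ⟨i, j⟩ ⟨i', j'⟩
  fin_cases i <;> fin_cases j <;> fin_cases i' <;> fin_cases j' <;>
    simp [UB, Y2, rot, σy] <;> ring_nf <;> simp

lemma UB_conj_kronecker (ν θ : ℝ) (A B : M2) :
    (UB ν θ)ᴴ * (A ⊗ₖ B) * UB ν θ =
      A ⊗ₖ ((rot (Real.cos θ) (ν * Real.sin θ))ᴴ * B * rot (Real.cos θ) (ν * Real.sin θ)) := by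
  rw [UB_eq_one_kronecker_rot, conjTranspose_one_kronecker_mul_kronecker_mul]

lemma UB_conj_H2m_add_Vm (k h : ℝ) {ν : ℝ} (hν : ν ^ 2 = 1) (θ : ℝ) :
    (UB ν θ)ᴴ * (H2m k h + Vm k h) * UB ν θ =
      (((h ^ 2 + 2 * k ^ 2) / Real.sqrt (h ^ 2 + k ^ 2) : ℝ) : ℂ) • 1
        + (Real.cos (2 * θ) : ℂ) • ((h : ℂ) • Z2 + ((2 * k : ℝ) : ℂ) • XX)
        + (ν : ℂ) • (Real.sin (2 * θ) : ℂ) • (((2 * k : ℝ) : ℂ) • (σx ⊗ₖ σz) - (h : ℂ) • X2) := by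
  have hcos : Real.cos θ ^ 2 - (ν * Real.sin θ) ^ 2 = Real.cos (2 * θ) := by
    rw [mul_pow, hν, one_mul, Real.cos_two_mul']
  have hsin : 2 * Real.cos θ * (ν * Real.sin θ) = ν * Real.sin (2 * θ) := by
    rw [Real.sin_two_mul]; ring
  have hone : Real.cos θ ^ 2 + (ν * Real.sin θ) ^ 2 = 1 := by
    rw [mul_pow, hν, one_mul, add_comm, Real.sin_sq_add_cos_sq]
  have h1 : (1 : M4) = (1 : M2) ⊗ₖ (1 : M2) := one_kronecker_one.symm
  simp only [H2m, Vm, Z2, XX, X2, h1, Matrix.add_mul, Matrix.mul_add, Matrix.smul_mul,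
    Matrix.mul_smul, Matrix.mul_one, UB_conj_kronecker, rot_conjTranspose_mul_self, rot_conj_σz,
    rot_conj_σx, hcos, hsin, hone, sub_eq_add_neg, ← neg_smul, kronecker_smul, kronecker_add]
  push_cast
  module

lemma X1_mul_X1 : X1 * X1 = 1 := by
  rw [X1, ← mul_kronecker_mul, σx_mul_σx, one_mul, one_kronecker_one]

lemma X1_mul_X2 : X1 * X2 = XX := by
  rw [X1, X2, ← mul_kronecker_mul, mul_one, one_mul, XX]

lemma X1_mul_σx_kronecker (B : M2) : X1 * (σx ⊗ₖ B) = (1 : M2) ⊗ₖ B := by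
  rw [X1, ← mul_kronecker_mul, σx_mul_σx, one_mul]

lemma PA_neg_one : PA (-1) = (2 : ℂ)⁻¹ • (1 - X1) := by
  simp [PA, sub_eq_add_neg]

lemma PA_one : PA 1 = (2 : ℂ)⁻¹ • (1 + X1) := by
  simp [PA]

lemma trace_ρQET_mul (k h θ : ℝ) (E : M4) :
    (ρQET k h θ * E).trace = (gProj k h *
      (PA (-1) * ((UB (-1) θ)ᴴ * E * UB (-1) θ) * PA (-1)
        + PA 1 * ((UB 1 θ)ᴴ * E * UB 1 θ) * PA 1)).trace := by
  have cycle : ∀ U P : M4, (U * P * gProj k h * P * Uᴴ * E).trace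
      = (gProj k h * (P * (Uᴴ * E * U) * P)).trace := fun U P => by
    calc (U * P * gProj k h * P * Uᴴ * E).trace = (U * (P * gProj k h * P * Uᴴ * E)).trace := by
          simp only [mul_assoc]
      _ = (P * gProj k h * P * Uᴴ * E * U).trace := trace_mul_comm _ _
      _ = (P * (gProj k h * P * Uᴴ * E * U)).trace := by simp only [mul_assoc]
      _ = (gProj k h * (P * (Uᴴ * E * U) * P)).trace := by
          rw [trace_mul_comm]; simp only [mul_assoc]
  rw [ρQET, Matrix.add_mul, trace_add, cycle, cycle, Matrix.mul_add, trace_add]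

lemma pinched_H2m_add_Vm (k h θ : ℝ) :
    PA (-1) * ((UB (-1) θ)ᴴ * (H2m k h + Vm k h) * UB (-1) θ) * PA (-1)
      + PA 1 * ((UB 1 θ)ᴴ * (H2m k h + Vm k h) * UB 1 θ) * PA 1
      = (((h ^ 2 + 2 * k ^ 2) / Real.sqrt (h ^ 2 + k ^ 2) : ℝ) : ℂ) • 1
        + ((h * Real.cos (2 * θ) + 2 * k * Real.sin (2 * θ) : ℝ) : ℂ) • Z2
        + ((2 * k * Real.cos (2 * θ) - h * Real.sin (2 * θ) : ℝ) : ℂ) • XX := by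
  rw [UB_conj_H2m_add_Vm k h (by norm_num) θ, UB_conj_H2m_add_Vm k h (by norm_num) θ,
    PA_neg_one, PA_one, Complex.ofReal_neg, Complex.ofReal_one, neg_one_smul, one_smul,
    ← sub_eq_add_neg, pinching_sum_eq X1_mul_X1]
  · have hZ2 : (1 : M2) ⊗ₖ σz = Z2 := rfl
    rw [Matrix.mul_smul, Matrix.mul_sub, Matrix.mul_smul, Matrix.mul_smul, X1_mul_σx_kronecker,
      X1_mul_X2, hZ2]
    push_cast
    module
  · have hZ2 : Commute X1 Z2 := (Commute.one_right σx).kronecker_one_left σz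
    have hXX : Commute X1 XX := (Commute.refl σx).kronecker_one_left σx
    exact ((Commute.one_right X1).smul_right _).add_right
      (((hZ2.smul_right _).add_right (hXX.smul_right _)).smul_right _)
  · have hXZ : Commute X1 (σx ⊗ₖ σz) := (Commute.refl σx).kronecker_one_left σz
    have hX2 : Commute X1 X2 := (Commute.one_right σx).kronecker_one_left σx
    exact ((hXZ.smul_right _).sub_right (hX2.smul_right _)).smul_right _

end Heisenberg

section GroundState

lemma trace_vecMulVec_e00_sub_e11_mul (a b : ℝ) (α β γ : ℂ) :
    (vecMulVec (fun p => (a : ℂ) * e00 p - (b : ℂ) * e11 p)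
        (star fun p => (a : ℂ) * e00 p - (b : ℂ) * e11 p) * (α • 1 + β • Z2 + γ • XX)).trace
      = α * (a ^ 2 + b ^ 2 : ℝ) + β * (a ^ 2 - b ^ 2 : ℝ) - γ * (2 * a * b : ℝ) := by
  simp [trace, mul_apply, vecMulVec_apply, Fintype.sum_prod_type, Z2, XX, σz, σx, e00, e11,
    Matrix.one_apply]
  ring

lemma abs_div_sqrt_sq_add_sq_le_one (h k : ℝ) : |h / Real.sqrt (h ^ 2 + k ^ 2)| ≤ 1 := by
  rw [abs_div, abs_of_nonneg (Real.sqrt_nonneg _)]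
  exact div_le_one_of_le₀ (Real.abs_le_sqrt (by nlinarith)) (Real.sqrt_nonneg _)

lemma sqrt_one_sub_div_mul_sqrt_one_add_div {k : ℝ} (hk : 0 < k) (h : ℝ) :
    Real.sqrt (1 - h / Real.sqrt (h ^ 2 + k ^ 2)) * Real.sqrt (1 + h / Real.sqrt (h ^ 2 + k ^ 2))
      = k / Real.sqrt (h ^ 2 + k ^ 2) := by
  have hr : 0 < Real.sqrt (h ^ 2 + k ^ 2) := Real.sqrt_pos.2 (by positivity)
  have hr2 : Real.sqrt (h ^ 2 + k ^ 2) ^ 2 = h ^ 2 + k ^ 2 := Real.sq_sqrt (by positivity)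
  have hsq : (1 - h / Real.sqrt (h ^ 2 + k ^ 2)) * (1 + h / Real.sqrt (h ^ 2 + k ^ 2))
      = (k / Real.sqrt (h ^ 2 + k ^ 2)) ^ 2 := by
    field_simp
    linear_combination hr2
  rw [← Real.sqrt_mul (by linarith [(abs_le.mp (abs_div_sqrt_sq_add_sq_le_one h k)).2]), hsq,
    Real.sqrt_sq (by positivity)]

lemma trace_gProj_mul {k : ℝ} (hk : 0 < k) (h : ℝ) (α β γ : ℂ) :
    (gProj k h * (α • 1 + β • Z2 + γ • XX)).trace
      = α - β * (h / Real.sqrt (h ^ 2 + k ^ 2) : ℝ) - γ * (k / Real.sqrt (h ^ 2 + k ^ 2) : ℝ) := by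
  obtain ⟨hlo, hhi⟩ := abs_le.mp (abs_div_sqrt_sq_add_sq_le_one h k)
  set t := h / Real.sqrt (h ^ 2 + k ^ 2)
  have hminus : Real.sqrt (1 - t) ^ 2 = 1 - t := Real.sq_sqrt (by linarith)
  have hplus : Real.sqrt (1 + t) ^ 2 = 1 + t := Real.sq_sqrt (by linarith)
  have half : (1 / Real.sqrt 2) ^ 2 = 1 / 2 := by rw [div_pow, Real.sq_sqrt zero_le_two, one_pow]
  have hsum : (1 / Real.sqrt 2 * Real.sqrt (1 - t)) ^ 2
      + (1 / Real.sqrt 2 * Real.sqrt (1 + t)) ^ 2 = 1 := by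
    rw [mul_pow, mul_pow, half, hminus, hplus]; ring
  have hdiff : (1 / Real.sqrt 2 * Real.sqrt (1 - t)) ^ 2
      - (1 / Real.sqrt 2 * Real.sqrt (1 + t)) ^ 2 = -t := by
    rw [mul_pow, mul_pow, half, hminus, hplus]; ring
  have htwo : 2 * (1 / Real.sqrt 2 * Real.sqrt (1 - t)) * (1 / Real.sqrt 2 * Real.sqrt (1 + t))
      = k / Real.sqrt (h ^ 2 + k ^ 2) := by
    rw [← sqrt_one_sub_div_mul_sqrt_one_add_div hk h]
    linear_combination 2 * Real.sqrt (1 - t) * Real.sqrt (1 + t) * half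
  unfold gProj gs
  rw [trace_vecMulVec_e00_sub_e11_mul, hsum, hdiff, htwo]
  push_cast
  ring

end GroundState

theorem qet_local_energy_expectation_general (k h : ℝ) (hk : 0 < k) (θ : ℝ) :
    (ρQET k h θ * (H2m k h + Vm k h)).trace =
      ((1 / Real.sqrt (h ^ 2 + k ^ 2) *
        (-(h * k) * Real.sin (2 * θ) + (h ^ 2 + 2 * k ^ 2) * (1 - Real.cos (2 * θ))) : ℝ) : ℂ) := by
  rw [trace_ρQET_mul, pinched_H2m_add_Vm, trace_gProj_mul hk]
  push_cast
  ring

/-- Bob's expected local energy: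
`Tr[ρ_QET(θ)·(H₂+V)] = (1/√(h²+k²))·[−hk·sin 2θ + (h²+2k²)·(1 − cos 2θ)]`. -/
theorem qet_local_energy_expectation (k h : ℝ) (hk : 0 < k) (hh : 0 < h) (θ : ℝ) :
    (ρQET k h θ * (H2m k h + Vm k h)).trace =
      ((1 / Real.sqrt (h ^ 2 + k ^ 2) *
        (-(h * k) * Real.sin (2 * θ) + (h ^ 2 + 2 * k ^ 2) * (1 - Real.cos (2 * θ))) : ℝ) : ℂ) :=
  qet_local_energy_expectation_general k h hk θ
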